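/- Let M be a smooth manifold, I ⊆ TM an involutive vector subbundle of rank k spanned in a foliated chart by the coordinate vector fields ∂_{x¹},…,∂_{x^k}, and let (X₁,α¹),…,(X_r,α^r) be smooth local sections of TM ⊕ I° such that for every l = 1,…,k and i = 1,…,r one has [(∂_{x^l},0),(X_i,α^i)] = Σ_{j=1}^k A_{li}^j (∂_{x^j},0) + Σ_{s=1}^r B_{ls}^i (X_s,α^s) for smooth functions A_{li}^j, B_{ls}^i. Writing (X̃_i, α̃^i) := Σ_{j=k+1}^n (X_i^j ∂_{x^j}, α_j^i dx^j) for the components transverse to the foliation, then for all l = 1,…,k and i = 1,…,r: [(∂_{x^l},0),(X̃_i,α̃^i)] = Σ_{s=1}^r B_{ls}^i (X̃_s, α̃^s). -/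

import Mathlib

open Bundle Set
open scoped Manifold
noncomputable section

namespace Paper

/-- Sum of two subsets of a module. -/
def setAdd {X : Type*} [Add X] (A B : Set X) : Set X := {x | ∃ a ∈ A, ∃ b ∈ B, x = a + b}

section Model
variable {F : Type*} [NormedAddCommGroup F] [NormedSpace ℝ F]

/-- Lie derivative of a covector field along a vector field in a vector space (within a set):
`(£_V ω)(x) = Dω(x)(V x) + ω(x) ∘ DV(x)`. -/
def covLieWithin (V : F → F) (ω : F → F →L[ℝ] ℝ) (s : Set F) (x : F) : F →L[ℝ] ℝ :=
  fderivWithin ℝ ω s x (V x) + (ω x).comp (fderivWithin ℝ V s x)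

/-- Interior product `i_V dω` in a vector space (within a set):
`(i_V dω)(x) w = dω(x)(V x, w)`. -/
def iExtWithin (V : F → F) (ω : F → F →L[ℝ] ℝ) (s : Set F) (x : F) : F →L[ℝ] ℝ :=
  fderivWithin ℝ ω s x (V x) - (fderivWithin ℝ ω s x).flip (V x)

/-- Lie derivative of a covector field along a vector field in a vector space. -/
def covLie (V : F → F) (ω : F → F →L[ℝ] ℝ) (x : F) : F →L[ℝ] ℝ :=
  fderiv ℝ ω x (V x) + (ω x).comp (fderiv ℝ V x)

/-- Interior product `i_V dω` in a vector space. -/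
def iExt (V : F → F) (ω : F → F →L[ℝ] ℝ) (x : F) : F →L[ℝ] ℝ :=
  fderiv ℝ ω x (V x) - (fderiv ℝ ω x).flip (V x)

/-- The skew-symmetric Courant bracket of two sections `(X,α)`, `(Y,β)` of the Pontryagin
bundle of a vector space:
`[(X,α),(Y,β)] = ([X,Y], £_X β − i_Y dα − ½ d(β(X)+α(Y)))`. -/
def vsCourantSkew (X : F → F) (α : F → F →L[ℝ] ℝ) (Y : F → F) (β : F → F →L[ℝ] ℝ)
    (x : F) : F × (F →L[ℝ] ℝ) :=
  (VectorField.lieBracket ℝ X Y x,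
    covLie X β x - iExt Y α x
      - (2⁻¹ : ℝ) • fderiv ℝ (fun p => β p (X p) + α p (Y p)) x)

/-- The projection of `ℝⁿ` onto the coordinates `x^{k+1}, …, x^n`. -/
def projTail (n k : ℕ) : (Fin n → ℝ) →L[ℝ] (Fin n → ℝ) :=
  ContinuousLinearMap.pi fun j : Fin n =>
    if (j : ℕ) < k then 0 else ContinuousLinearMap.proj j

end Model

variable {E : Type*} [NormedAddCommGroup E] [NormedSpace ℝ E]
  {H : Type*} [TopologicalSpace H] (I : ModelWithCorners ℝ E H)
  {M : Type*} [TopologicalSpace M] [ChartedSpace H M] [IsManifold I (⊤ : ℕ∞) M]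

variable (M) in
/-- Vector fields on `M`. -/
abbrev VF := (m : M) → TangentSpace I m

variable (M) in
/-- Covector fields (one-forms) on `M`. -/
abbrev OF := (m : M) → TangentSpace I m →L[ℝ] ℝ

variable (M) in
/-- The fiber of the Pontryagin bundle `TM ⊕ T*M` at `m`. -/
abbrev PFiber (m : M) := TangentSpace I m × (TangentSpace I m →L[ℝ] ℝ)

/-- The canonical symmetric pairing on the Pontryagin bundle:
`⟨(u,α),(v,β)⟩ = β(u) + α(v)`. -/
def pair {m : M} (σ τ : PFiber I M m) : ℝ := τ.2 σ.1 + σ.2 τ.1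

/-- A vector field is smooth on `U` if it is a smooth section of the tangent bundle there. -/
def IsSmoothVFOn (X : VF I M) (U : Set M) : Prop :=
  ContMDiffOn I I.tangent (⊤ : ℕ∞) (fun m => (⟨m, X m⟩ : TangentBundle I M)) U

/-- A one-form is smooth on `U` if it is a smooth section there of the bundle of continuous
linear maps from `TM` to the trivial real line bundle. -/
def IsSmoothOFOn (α : OF I M) (U : Set M) : Prop :=
  ContMDiffOn I (I.prod 𝓘(ℝ, E →L[ℝ] ℝ)) (⊤ : ℕ∞)
    (fun m => (⟨m, α m⟩ : TotalSpace (E →L[ℝ] ℝ)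
      (fun x : M => TangentSpace I x →SL[RingHom.id ℝ] Bundle.Trivial M ℝ x))) U

variable (M) in
/-- A generalized distribution in the Pontryagin bundle: a fiberwise family of subsets. -/
abbrev GDist := (m : M) → Set (PFiber I M m)

/-- `(X, α)` is a smooth local section of `Δ` over `U`. -/
def IsSecOn (X : VF I M) (α : OF I M) (Δ : GDist I M) (U : Set M) : Prop :=
  IsSmoothVFOn I X U ∧ IsSmoothOFOn I α U ∧ ∀ m ∈ U, ((X m, α m) : PFiber I M m) ∈ Δ m

/-- `Δ` is a smooth generalized distribution: every element of every fiber is the value of a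
local smooth section of the Pontryagin bundle taking values in `Δ`. -/
def IsSmoothDist (Δ : GDist I M) : Prop :=
  ∀ m, ∀ v ∈ Δ m, ∃ U X α, IsOpen U ∧ m ∈ U ∧ IsSecOn I X α Δ U ∧
    ((X m, α m) : PFiber I M m) = v

/-- The pointwise orthogonal of a subset of a Pontryagin fiber. -/
def ptOrth {m : M} (S : Set (PFiber I M m)) : Set (PFiber I M m) :=
  {σ | ∀ τ ∈ S, pair I σ τ = 0}

/-- The smooth orthogonal distribution `Δ^⊥`: values of local smooth sections of the
Pontryagin bundle pairing to zero, on common domains, with all local smooth sections of `Δ`. -/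
def smoothOrth (Δ : GDist I M) (m : M) : Set (PFiber I M m) :=
  {v | ∃ U X α, IsOpen U ∧ m ∈ U ∧ IsSmoothVFOn I X U ∧ IsSmoothOFOn I α U ∧
      ((X m, α m) : PFiber I M m) = v ∧
      ∀ V Y β, IsOpen V → IsSecOn I Y β Δ V →
        ∀ m' ∈ U ∩ V, pair I ((X m', α m') : PFiber I M m') (Y m', β m') = 0}

/-- `Δ` is a vector subbundle of the Pontryagin bundle: the fibers are subspaces and around
every point there is a local frame of smooth sections. -/
def IsSubbundle (Δ : GDist I M) : Prop :=
  (∀ m, ∃ S : Submodule ℝ (PFiber I M m), (S : Set (PFiber I M m)) = Δ m) ∧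
  ∀ m, ∃ (U : Set M), IsOpen U ∧ m ∈ U ∧
    ∃ (k : ℕ) (X : Fin k → VF I M) (α : Fin k → OF I M),
      (∀ i, IsSmoothVFOn I (X i) U ∧ IsSmoothOFOn I (α i) U) ∧
      ∀ m' ∈ U, LinearIndependent ℝ (fun i => ((X i m', α i m') : PFiber I M m')) ∧
        Δ m' = ↑(Submodule.span ℝ (Set.range fun i => ((X i m', α i m') : PFiber I M m')))

/-- `Δ` is locally finitely generated. -/
def IsLocFinGen (Δ : GDist I M) : Prop :=
  ∀ m, ∃ (U : Set M), IsOpen U ∧ m ∈ U ∧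
    ∃ (k : ℕ) (X : Fin k → VF I M) (α : Fin k → OF I M),
      (∀ i, IsSmoothVFOn I (X i) U ∧ IsSmoothOFOn I (α i) U) ∧
      ∀ m' ∈ U, Δ m' = ↑(Submodule.span ℝ (Set.range fun i => ((X i m', α i m') : PFiber I M m')))

/-- A subset of a Pontryagin fiber has rank (dimension) `r`. -/
def HasRank {m : M} (S : Set (PFiber I M m)) (r : ℕ) : Prop :=
  ∃ f : Fin r → PFiber I M m, (∀ i, f i ∈ S) ∧ LinearIndependent ℝ f ∧
    ∀ σ ∈ S, σ ∈ Submodule.span ℝ (Set.range f)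

/-- The rank of `Δ` is locally constant. -/
def LocConstRank (Δ : GDist I M) : Prop :=
  ∀ m, ∃ U, IsOpen U ∧ m ∈ U ∧ ∃ r : ℕ, ∀ m' ∈ U, HasRank I (Δ m') r

variable (M) in
/-- Tangent distributions. -/
abbrev TDist := (m : M) → Set (TangentSpace I m)

/-- `Z` is a smooth local section of the tangent distribution `T` over `U`. -/
def IsTSecOn (Z : VF I M) (T : TDist I M) (U : Set M) : Prop :=
  IsSmoothVFOn I Z U ∧ ∀ m ∈ U, Z m ∈ T m

/-- smooth tangent distribution -/
def IsSmoothTDist (T : TDist I M) : Prop :=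
  ∀ m, ∀ v ∈ T m, ∃ U Z, IsOpen U ∧ m ∈ U ∧ IsTSecOn I Z T U ∧ Z m = v

/-- `T ⊆ TM` is a vector subbundle of the tangent bundle. -/
def IsTSubbundle (T : TDist I M) : Prop :=
  (∀ m, ∃ S : Submodule ℝ (TangentSpace I m), (S : Set (TangentSpace I m)) = T m) ∧
  ∀ m, ∃ (U : Set M), IsOpen U ∧ m ∈ U ∧ ∃ (k : ℕ) (Z : Fin k → VF I M),
    (∀ i, IsSmoothVFOn I (Z i) U) ∧
    ∀ m' ∈ U, LinearIndependent ℝ (fun i => Z i m') ∧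
      T m' = ↑(Submodule.span ℝ (Set.range fun i => Z i m'))

/-- A locally finitely generated tangent distribution. -/
def IsTLocFinGen (T : TDist I M) : Prop :=
  ∀ m, ∃ (U : Set M), IsOpen U ∧ m ∈ U ∧ ∃ (k : ℕ) (Z : Fin k → VF I M),
    (∀ i, IsSmoothVFOn I (Z i) U) ∧
    ∀ m' ∈ U, T m' = ↑(Submodule.span ℝ (Set.range fun i => Z i m'))

/-- The smooth annihilator `T°` of a tangent distribution: values of local smooth one-forms
vanishing, on common domains, on all local smooth sections of `T`. -/
def annOf (T : TDist I M) (m : M) : Set (TangentSpace I m →L[ℝ] ℝ) :=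
  {ω | ∃ U α, IsOpen U ∧ m ∈ U ∧ IsSmoothOFOn I α U ∧
      (∀ V Z, IsOpen V → IsTSecOn I Z T V → ∀ m' ∈ U ∩ V, α m' (Z m') = 0) ∧
      α m = ω}

variable (M) in
/-- Cotangent distributions. -/
abbrev CDist := (m : M) → Set (TangentSpace I m →L[ℝ] ℝ)

/-- `β` is a smooth local section of the cotangent distribution `C` over `U`. -/
def IsCSecOn (β : OF I M) (C : CDist I M) (U : Set M) : Prop :=
  IsSmoothOFOn I β U ∧ ∀ m ∈ U, β m ∈ C m

/-- smooth cotangent distribution -/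
def IsSmoothCDist (C : CDist I M) : Prop :=
  ∀ m, ∀ ω ∈ C m, ∃ U β, IsOpen U ∧ m ∈ U ∧ IsCSecOn I β C U ∧ β m = ω

/-- The smooth annihilator `C°` of a cotangent distribution. -/
def coannOf (C : CDist I M) (m : M) : Set (TangentSpace I m) :=
  {v | ∃ U Z, IsOpen U ∧ m ∈ U ∧ IsSmoothVFOn I Z U ∧
      (∀ V β, IsOpen V → IsCSecOn I β C V → ∀ m' ∈ U ∩ V, β m' (Z m') = 0) ∧
      Z m = v}

/-- The pullback of a vector field to the model space via the preferred chart at `m`. -/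
def chartVF (m : M) (X : VF I M) : E → E := fun x =>
  (mfderivWithin 𝓘(ℝ, E) I (extChartAt I m).symm (Set.range I) x).inverse
    (X ((extChartAt I m).symm x))

/-- The pullback of a one-form to the model space via the preferred chart at `m`. -/
def chartOF (m : M) (α : OF I M) : E → (E →L[ℝ] ℝ) := fun x =>
  (α ((extChartAt I m).symm x)).comp
    (mfderivWithin 𝓘(ℝ, E) I (extChartAt I m).symm (Set.range I) x)

/-- The Lie bracket of vector fields on a manifold, computed in the preferred chart. -/
def mlieB (X Y : VF I M) (m : M) : TangentSpace I m :=
  mfderivWithin 𝓘(ℝ, E) I (extChartAt I m).symm (Set.range I) (extChartAt I m m)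
    ((VectorField.lieBracketWithin ℝ (chartVF I m X) (chartVF I m Y)
      (Set.range I) (extChartAt I m m) : E))

/-- The Lie derivative `£_X α` of a one-form along a vector field on a manifold. -/
def mlieDerivOF (X : VF I M) (α : OF I M) (m : M) : TangentSpace I m →L[ℝ] ℝ :=
  (covLieWithin (chartVF I m X) (chartOF I m α) (Set.range I) (extChartAt I m m)).comp
    (mfderiv I 𝓘(ℝ, E) (extChartAt I m) m)

/-- The interior product `i_Y dα` on a manifold. -/
def miExtDeriv (Y : VF I M) (α : OF I M) (m : M) : TangentSpace I m →L[ℝ] ℝ :=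
  (iExtWithin (chartVF I m Y) (chartOF I m α) (Set.range I) (extChartAt I m m)).comp
    (mfderiv I 𝓘(ℝ, E) (extChartAt I m) m)

/-- The differential of a real function on a manifold, as a one-form. -/
def mdiff (f : M → ℝ) (m : M) : TangentSpace I m →L[ℝ] ℝ :=
  mfderiv I 𝓘(ℝ, ℝ) f m

/-- The skew-symmetric Courant bracket on sections of the Pontryagin bundle:
`[(X,α),(Y,β)] = ([X,Y], £_X β − i_Y dα − ½ d(β(X)+α(Y)))`. -/
def courantSkew (X : VF I M) (α : OF I M) (Y : VF I M) (β : OF I M) (m : M) :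
    PFiber I M m :=
  (mlieB I X Y m,
    mlieDerivOF I X β m - miExtDeriv I Y α m
      - (2⁻¹ : ℝ) • mdiff I (fun p => β p (X p) + α p (Y p)) m)

/-- The (non-skew-symmetric) Courant bracket `[(X,α),(Y,β)] = ([X,Y], £_X β − i_Y dα)`. -/
def courant (X : VF I M) (α : OF I M) (Y : VF I M) (β : OF I M) (m : M) :
    PFiber I M m :=
  (mlieB I X Y m, mlieDerivOF I X β m - miExtDeriv I Y α m)

/-- A Dirac structure: a Lagrangian vector subbundle of the Pontryagin bundle. -/
def IsDirac (D : (m : M) → Submodule ℝ (PFiber I M m)) : Prop :=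
  IsSubbundle I (fun m => (D m : Set (PFiber I M m))) ∧
  ∀ m, (D m : Set (PFiber I M m)) = ptOrth I (D m : Set (PFiber I M m))

/-- A Dirac structure is closed (integrable) if the Courant bracket of any two local smooth
sections of `D` is again a section of `D`. -/
def IsClosedDirac (D : (m : M) → Submodule ℝ (PFiber I M m)) : Prop :=
  ∀ U₁ U₂ X α Y β, IsOpen U₁ → IsOpen U₂ →
    IsSecOn I X α (fun m => (D m : Set (PFiber I M m))) U₁ →
    IsSecOn I Y β (fun m => (D m : Set (PFiber I M m))) U₂ →
    ∀ m ∈ U₁ ∩ U₂, courant I X α Y β m ∈ D m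

section Action
variable {E' : Type*} [NormedAddCommGroup E'] [NormedSpace ℝ E']
  {H' : Type*} [TopologicalSpace H'] (I' : ModelWithCorners ℝ E' H')
  {G : Type*} [TopologicalSpace G] [ChartedSpace H' G] [Group G] [LieGroup I' (⊤ : ℕ∞) G]

/-- A smooth left action of a Lie group `G` on `M`. -/
def IsSmoothAction (Φ : G → M → M) : Prop :=
  ContMDiff (I'.prod I) I (⊤ : ℕ∞) (fun p : G × M => Φ p.1 p.2) ∧
  (∀ m, Φ 1 m = m) ∧ ∀ g h m, Φ g (Φ h m) = Φ (g * h) m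

/-- The action is proper. -/
def IsProperAction (Φ : G → M → M) : Prop :=
  IsProperMap (fun p : G × M => (Φ p.1 p.2, p.2))

/-- All isotropy subgroups of the action are conjugated. -/
def ConjIsotropy (Φ : G → M → M) : Prop :=
  ∀ m m' : M, ∃ g : G, ∀ h : G, Φ h m' = m' ↔ Φ (g⁻¹ * h * g) m = m

/-- The infinitesimal generator of the action associated to `ξ ∈ 𝔤 = T₁G`:
`ξ_M(m) = T₁(g ↦ Φ g m)(ξ)`. -/
def gen (Φ : G → M → M) (ξ : TangentSpace I' (1 : G)) : VF I M :=
  fun m => mfderiv I' I (fun g => Φ g m) (1 : G) ξ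

/-- The vertical distribution of the action: values of the infinitesimal generators. -/
def vert (Φ : G → M → M) : TDist I M :=
  fun m => {v | ∃ ξ : TangentSpace I' (1 : G), gen I I' Φ ξ m = v}

/-- `X` is a `G`-invariant vector field on `U` (`Φ_g^* X = X`). -/
def IsInvVFOn (Φ : G → M → M) (X : VF I M) (U : Set M) : Prop :=
  ∀ g : G, ∀ m ∈ U, Φ g m ∈ U → mfderiv I I (Φ g) m (X m) = X (Φ g m)

/-- `α` is a `G`-invariant one-form on `U` (`Φ_g^* α = α`). -/
def IsInvOFOn (Φ : G → M → M) (α : OF I M) (U : Set M) : Prop :=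
  ∀ g : G, ∀ m ∈ U, Φ g m ∈ U → (α (Φ g m)).comp (mfderiv I I (Φ g) m) = α m

/-- The smooth annihilator `V°` of the vertical distribution: values of local smooth
one-forms annihilating all infinitesimal generators. -/
def vertAnn (Φ : G → M → M) (m : M) : Set (TangentSpace I m →L[ℝ] ℝ) :=
  {ω | ∃ U α, IsOpen U ∧ m ∈ U ∧ IsSmoothOFOn I α U ∧
      (∀ m' ∈ U, ∀ ξ : TangentSpace I' (1 : G), α m' (gen I I' Φ ξ m') = 0) ∧
      α m = ω}

/-- The fiber of `D ∩ K^⊥` where `K = V ⊕ {0}` and `K^⊥ = TM ⊕ V°`. -/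
def DcapKperp (Φ : G → M → M) (D : (m : M) → Submodule ℝ (PFiber I M m)) (m : M) :
    Set (PFiber I M m) :=
  {σ | σ ∈ D m ∧ σ.2 ∈ vertAnn I I' Φ m}

/-- The action of `G` on the Dirac manifold `(M, D)` is canonical: the pullback by every
`Φ_g` of an element of `D` lies in `D`. -/
def IsCanonical (Φ : G → M → M) (D : (m : M) → Submodule ℝ (PFiber I M m)) : Prop :=
  ∀ (g : G) (m : M), ∀ σ ∈ D (Φ g m),
    ((mfderiv I I (Φ g⁻¹) (Φ g m) σ.1,
      σ.2.comp (mfderiv I I (Φ g) m)) : PFiber I M m) ∈ D m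

/-- `(X, α)` is a descending section of `TM ⊕ V°` on `U`: it is smooth, `[X, Γ(V)] ⊆ Γ(V)`,
and `α` is a `G`-invariant one-form annihilating the vertical distribution. -/
def IsDescendingOn (Φ : G → M → M) (X : VF I M) (α : OF I M) (U : Set M) : Prop :=
  IsSmoothVFOn I X U ∧ IsSmoothOFOn I α U ∧
  (∀ V W, IsOpen V → IsTSecOn I W (vert I I' Φ) V →
    ∀ m ∈ U ∩ V, mlieB I X W m ∈ vert I I' Φ m) ∧
  IsInvOFOn I Φ α U ∧
  (∀ m ∈ U, ∀ ξ : TangentSpace I' (1 : G), α m (gen I I' Φ ξ m) = 0)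

end Action

lemma projTail_single {n k : ℕ} (j : Fin n) (hj : (j : ℕ) < k) :
    projTail n k (Pi.single j 1) = 0 := by
  funext m
  simp only [projTail, ContinuousLinearMap.pi_apply, Pi.zero_apply]
  by_cases hm : (m : ℕ) < k
  · simp [hm]
  · rw [if_neg hm]
    simp only [ContinuousLinearMap.proj_apply]
    exact Pi.single_eq_of_ne (fun h : m = j => hm (h ▸ hj)) 1

lemma clm_fderiv_comp {F G : Type*} [NormedAddCommGroup F] [NormedSpace ℝ F]
    [NormedAddCommGroup G] [NormedSpace ℝ G]
    (L : F →L[ℝ] G) {f : F → F} {x : F} (hf : DifferentiableAt ℝ f x) :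
    fderiv ℝ (fun y => L (f y)) x = L.comp (fderiv ℝ f x) :=
  (L.hasFDerivAt.comp x hf.hasFDerivAt).fderiv

lemma clm_fderiv_comp' {F G H : Type*} [NormedAddCommGroup F] [NormedSpace ℝ F]
    [NormedAddCommGroup G] [NormedSpace ℝ G] [NormedAddCommGroup H] [NormedSpace ℝ H]
    (L : G →L[ℝ] H) {f : F → G} {x : F} (hf : DifferentiableAt ℝ f x) :
    fderiv ℝ (fun y => L (f y)) x = L.comp (fderiv ℝ f x) :=
  (L.hasFDerivAt.comp x hf.hasFDerivAt).fderiv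

/-- in a foliated chart for the involutive subbundle `I` (spanned by the first
`k` coordinate vector fields), if `[(∂_l,0),(X_i,α^i)] = Σ_j A (∂_j,0) + Σ_s B (X_s,α^s)`,
then the transverse components satisfy `[(∂_l,0),(X̃_i,α̃^i)] = Σ_s B (X̃_s,α̃^s)`. -/
theorem statement19 (n k r : ℕ) (hk : k ≤ n)
    (U : Set (Fin n → ℝ)) (hUopen : IsOpen U)
    (X : Fin r → (Fin n → ℝ) → (Fin n → ℝ))
    (α : Fin r → (Fin n → ℝ) → (Fin n → ℝ) →L[ℝ] ℝ)
    (hX : ∀ i, ContDiffOn ℝ (⊤ : ℕ∞) (X i) U)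
    (hα : ∀ i, ContDiffOn ℝ (⊤ : ℕ∞) (α i) U)
    (hann : ∀ i, ∀ x ∈ U, ∀ j : Fin n, (j : ℕ) < k → α i x (Pi.single j 1) = 0)
    (A : Fin k → Fin r → Fin k → (Fin n → ℝ) → ℝ)
    (B : Fin k → Fin r → Fin r → (Fin n → ℝ) → ℝ)
    (hA : ∀ l i j, ContDiffOn ℝ (⊤ : ℕ∞) (A l i j) U)
    (hB : ∀ l i s, ContDiffOn ℝ (⊤ : ℕ∞) (B l i s) U)
    (hbr : ∀ (l : Fin k) (i : Fin r), ∀ x ∈ U,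
      vsCourantSkew (fun _ => Pi.single (Fin.castLE hk l) 1) 0 (X i) (α i) x =
        (∑ j : Fin k, A l i j x •
          ((Pi.single (Fin.castLE hk j) 1 : Fin n → ℝ), (0 : (Fin n → ℝ) →L[ℝ] ℝ))) +
        ∑ s : Fin r, B l i s x • (X s x, α s x)) :
    ∀ (l : Fin k) (i : Fin r), ∀ x ∈ U,
      vsCourantSkew (fun _ => Pi.single (Fin.castLE hk l) 1) 0
          (fun y => projTail n k (X i y))
          (fun y => (α i y).comp (projTail n k)) x =
        ∑ s : Fin r, B l i s x •
          ((projTail n k (X s x), (α s x).comp (projTail n k)) :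
            (Fin n → ℝ) × ((Fin n → ℝ) →L[ℝ] ℝ)) := by
  intro l i x hx
  have hU : U ∈ nhds x := hUopen.mem_nhds hx
  set P : (Fin n → ℝ) →L[ℝ] (Fin n → ℝ) := projTail n k with hPdef
  set V : Fin n → ℝ := Pi.single (Fin.castLE hk l) 1 with hVdef
  have hlk : ((Fin.castLE hk l : Fin n) : ℕ) < k := by simpa using l.isLt
  have hPV : P V = 0 := projTail_single _ hlk
  have hXd : ∀ s, DifferentiableAt ℝ (X s) x := fun s =>
    ((hX s).contDiffAt hU).differentiableAt (by simp)
  have hαd : ∀ s, DifferentiableAt ℝ (α s) x := fun s =>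
    ((hα s).contDiffAt hU).differentiableAt (by simp)
  set L : ((Fin n → ℝ) →L[ℝ] ℝ) →L[ℝ] ((Fin n → ℝ) →L[ℝ] ℝ) :=
    (ContinuousLinearMap.compL ℝ (Fin n → ℝ) (Fin n → ℝ) ℝ).flip P with hLdef
  have hLapp : ∀ g : (Fin n → ℝ) →L[ℝ] ℝ, L g = g.comp P := fun g => rfl
  set T : ((Fin n → ℝ) × ((Fin n → ℝ) →L[ℝ] ℝ)) →L[ℝ]
      ((Fin n → ℝ) × ((Fin n → ℝ) →L[ℝ] ℝ)) := P.prodMap L with hTdef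
  have hαV : fderiv ℝ (fun p => α i p V) x = 0 := by
    have h1 : (fun p => α i p V) =ᶠ[nhds x] (fun _ => (0 : ℝ)) :=
      Filter.eventuallyEq_of_mem hU (fun p hp => hann i p hp _ hlk)
    rw [h1.fderiv_eq]; exact fderiv_const_apply 0
  have hz : fderiv ℝ (0 : (Fin n → ℝ) → (Fin n → ℝ) →L[ℝ] ℝ) x = 0 :=
    fderiv_const_apply 0
  have hflip0 : (ContinuousLinearMap.flip
      (0 : (Fin n → ℝ) →L[ℝ] (Fin n → ℝ) →L[ℝ] ℝ)) = 0 := by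
    ext v w; rfl
  -- simplify the hypothesis bracket
  have Hsimp : vsCourantSkew (fun _ => V) 0 (X i) (α i) x
      = (fderiv ℝ (X i) x V, fderiv ℝ (α i) x V) := by
    have e1 : (fun p : Fin n → ℝ => (α i p) ((fun _ : Fin n → ℝ => V) p)
        + (0 : (Fin n → ℝ) → (Fin n → ℝ) →L[ℝ] ℝ) p (X i p)) = fun p => α i p V := by
      funext p; simp
    simp only [vsCourantSkew, VectorField.lieBracket, covLie, iExt, e1, hαV, hz,
      fderiv_const_apply, ContinuousLinearMap.comp_zero, ContinuousLinearMap.zero_apply,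
      hflip0, zero_sub, sub_neg_eq_add, sub_zero, add_zero, smul_zero]
  have H := hbr l i x hx
  rw [Hsimp] at H
  -- simplify the goal bracket
  have Gsimp : vsCourantSkew (fun _ => V) 0
      (fun y => P (X i y)) (fun y => (α i y).comp P) x
      = T (fderiv ℝ (X i) x V, fderiv ℝ (α i) x V) := by
    have e0 : fderiv ℝ (fun p : Fin n → ℝ => (α i p) (P V)
        + (0 : (Fin n → ℝ) → (Fin n → ℝ) →L[ℝ] ℝ) p (P (X i p))) x = 0 := by
      have : (fun p : Fin n → ℝ => (α i p) (P V)
          + (0 : (Fin n → ℝ) → (Fin n → ℝ) →L[ℝ] ℝ) p (P (X i p))) = fun _ => (0 : ℝ) := by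
        funext p
        simp [hPV]
      rw [this]; exact fderiv_const_apply 0
    have e2 : (fun y => (α i y).comp P) = fun y => L (α i y) := by
      funext y; rw [hLapp]
    simp only [vsCourantSkew, VectorField.lieBracket, covLie, iExt, e2, hz,
      clm_fderiv_comp P (hXd i), clm_fderiv_comp' L (hαd i),
      fderiv_const_apply, ContinuousLinearMap.comp_zero, ContinuousLinearMap.zero_apply,
      ContinuousLinearMap.comp_apply, hflip0, zero_sub, sub_neg_eq_add,
      sub_zero, add_zero, smul_zero]
    rw [show (fun y => L (α i y)) = fun y => (α i y).comp P from e2.symm] at *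
    rw [e0]
    simp only [smul_zero, sub_zero]
    rfl
  rw [Gsimp, H, map_add, map_sum, map_sum]
  have hTj : ∀ j : Fin k, T ((Pi.single (Fin.castLE hk j) 1 : Fin n → ℝ),
      (0 : (Fin n → ℝ) →L[ℝ] ℝ)) = 0 := by
    intro j
    have h1 : P (Pi.single (Fin.castLE hk j) 1) = 0 :=
      projTail_single _ (by simpa using j.isLt)
    have h2 : T ((Pi.single (Fin.castLE hk j) 1 : Fin n → ℝ),
        (0 : (Fin n → ℝ) →L[ℝ] ℝ)) = (P (Pi.single (Fin.castLE hk j) 1), L 0) := rfl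
    rw [h2, h1, map_zero]
    rfl
  have hTs : ∀ s : Fin r, T (X s x, α s x) = (P (X s x), (α s x).comp P) := fun s => rfl
  simp only [map_smul, hTj, hTs, smul_zero, Finset.sum_const_zero, zero_add]

end Paper
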